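/- arXiv:2201.00354 — 3 statements merged into one kernel-verified Lean document; each statement's English description precedes it below -/
import Mathlib

section
/- Let A ⊆ Fin L with |A| = M be such that Y is conditionally independent of X_{Aᶜ} given X_A, let λ ≥ 0 and M ≤ N ≤ L. Then every set F ⊆ Fin L with A ⊆ F and |F| = N satisfies L_N(F; x) = 0 for every x with P(X = x) > 0, and consequently F minimizes L_N(·; x) over all subsets of Fin L (since L_N(F'; x) ≥ 0 for every F'). -/
open scoped Classical
open Finset

/-
A set `F ⊇ A` determines `X_A`, and conditional independence says that `P(Y = y | X = x')` depends
on `x'` only through `x'_A`. Splitting `{X_F = x_F}` into the fibres `{X = x'}` and applying this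
fibrewise gives `P(Y = · | X_F = x_F) = P(Y = · | X_A = x_A)` for every `F ⊇ A`, including
`F = univ`, where the event is `{X = x}`. Hence the KL term of `L_N(F; x)` vanishes, and the
penalty vanishes since `|F| = N`. Minimality is Gibbs' inequality, from `p log (p / q) ≥ p - q`.
-/

/-- Probability of an event under a (finite) probability mass `P`. -/
noncomputable def pr {Ω : Type*} [Fintype Ω] (P : Ω → ℝ) (E : Ω → Prop) : ℝ :=
  ∑ ω, if E ω then P ω else 0

/-- Conditional probability `P(E | C)`. -/
noncomputable def condPr {Ω : Type*} [Fintype Ω] (P : Ω → ℝ) (E C : Ω → Prop) : ℝ :=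
  pr P (fun ω => E ω ∧ C ω) / pr P C

/-- The event `{X_F = x_F}`, i.e. `X ω` agrees with `x` on the index set `F`. -/
def evSel {Ω V : Type*} {L : ℕ} (X : Ω → Fin L → V) (F : Finset (Fin L))
    (x : Fin L → V) : Ω → Prop :=
  fun ω => ∀ i ∈ F, X ω i = x i

/-- Kullback–Leibler divergence between two pmfs on a finite type. -/
noncomputable def klDiv {𝒴 : Type*} [Fintype 𝒴] (p q : 𝒴 → ℝ) : ℝ :=
  ∑ y, p y * Real.log (p y / q y)

/-- The conditional distribution `P(Y = · | C)`. -/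
noncomputable def condDist {Ω 𝒴 : Type*} [Fintype Ω] (P : Ω → ℝ) (Y : Ω → 𝒴)
    (C : Ω → Prop) : 𝒴 → ℝ :=
  fun y => condPr P (fun ω => Y ω = y) C

/-- Per-instance INVASE objective
`L_N(F; x) = KL(P(Y = · | X = x) ‖ P(Y = · | X_F = x_F)) + λ·| |F| − N |`. -/
noncomputable def invaseObj {Ω V 𝒴 : Type*} [Fintype Ω] [Fintype 𝒴] {L : ℕ}
    (P : Ω → ℝ) (X : Ω → Fin L → V) (Y : Ω → 𝒴) (lam : ℝ) (N : ℕ)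
    (F : Finset (Fin L)) (x : Fin L → V) : ℝ :=
  klDiv (condDist P Y (fun ω => X ω = x)) (condDist P Y (evSel X F x))
    + lam * |(F.card : ℝ) - (N : ℝ)|

section Probability

variable {Ω : Type*} [Fintype Ω] (P : Ω → ℝ)

lemma pr_nonneg (hP : ∀ ω, 0 ≤ P ω) (E : Ω → Prop) : 0 ≤ pr P E :=
  sum_nonneg fun ω _ => by split_ifs <;> simp [hP ω]

lemma pr_mono (hP : ∀ ω, 0 ≤ P ω) {E E' : Ω → Prop} (h : ∀ ω, E ω → E' ω) :
    pr P E ≤ pr P E' :=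
  sum_le_sum fun ω _ => by
    by_cases hE : E ω
    · simp [hE, h ω hE]
    · split_ifs <;> simp [hP ω]

lemma sum_pr_eq_and {𝒴 : Type*} [Fintype 𝒴] (Y : Ω → 𝒴) (C : Ω → Prop) :
    ∑ y, pr P (fun ω => Y ω = y ∧ C ω) = pr P C := by
  unfold pr
  rw [sum_comm]
  refine sum_congr rfl fun ω _ => ?_
  by_cases hC : C ω <;> simp [hC]

lemma pr_and_eq_sum_fibres {β : Type*} (f : Ω → β) (Q E : Ω → Prop) (S : β → Prop)
    (hE : ∀ ω, E ω ↔ S (f ω)) :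
    pr P (fun ω => Q ω ∧ E ω) = ∑ b ∈ (univ.image f).filter S, pr P (fun ω => Q ω ∧ f ω = b) := by
  unfold pr
  rw [sum_comm]
  refine sum_congr rfl fun ω _ => ?_
  by_cases hQ : Q ω <;> simp [hQ, hE]

lemma condDist_nonneg (hP : ∀ ω, 0 ≤ P ω) {𝒴 : Type*} (Y : Ω → 𝒴) (C : Ω → Prop) (y : 𝒴) :
    0 ≤ condDist P Y C y :=
  div_nonneg (pr_nonneg P hP _) (pr_nonneg P hP _)

lemma sum_condDist {𝒴 : Type*} [Fintype 𝒴] (Y : Ω → 𝒴) {C : Ω → Prop} (hC : pr P C ≠ 0) :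
    ∑ y, condDist P Y C y = 1 := by
  simp only [condDist, condPr, ← sum_div, sum_pr_eq_and, div_self hC]

lemma condDist_eq_zero_of_imp (hP : ∀ ω, 0 ≤ P ω) {𝒴 : Type*} (Y : Ω → 𝒴) {C C' : Ω → Prop}
    (hC : 0 < pr P C) (hC'C : ∀ ω, C' ω → C ω) {y : 𝒴} (h : condDist P Y C y = 0) :
    condDist P Y C' y = 0 := by
  have hnum : pr P (fun ω => Y ω = y ∧ C ω) = 0 :=
    (div_eq_zero_iff.1 h).resolve_right hC.ne'
  have hle : pr P (fun ω => Y ω = y ∧ C' ω) ≤ 0 :=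
    hnum ▸ pr_mono P hP fun ω h => ⟨h.1, hC'C ω h.2⟩
  simp only [condDist, condPr, le_antisymm hle (pr_nonneg P hP _), zero_div]

end Probability

section KullbackLeibler

variable {𝒴 : Type*} [Fintype 𝒴]

lemma sub_le_mul_log_div {p q : ℝ} (hp : 0 ≤ p) (hq : 0 ≤ q) (hpq : q = 0 → p = 0) :
    p - q ≤ p * Real.log (p / q) := by
  rcases hq.eq_or_lt with hq0 | hq0
  · simp [hpq hq0.symm, ← hq0]
  · calc p - q = q * (p / q - 1) := by field_simp
      _ ≤ q * (p / q * Real.log (p / q)) :=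
        mul_le_mul_of_nonneg_left (Real.self_sub_one_le_mul_log (div_nonneg hp hq)) hq
      _ = p * Real.log (p / q) := by field_simp

lemma klDiv_self (p : 𝒴 → ℝ) : klDiv p p = 0 :=
  sum_eq_zero fun y _ => by
    rcases eq_or_ne (p y) 0 with h | h <;> simp [h]

lemma klDiv_nonneg {p q : 𝒴 → ℝ} (hp : ∀ y, 0 ≤ p y) (hq : ∀ y, 0 ≤ q y)
    (hpq : ∀ y, q y = 0 → p y = 0) (hsum : ∑ y, q y ≤ ∑ y, p y) : 0 ≤ klDiv p q :=
  calc (0 : ℝ) ≤ ∑ y, p y - ∑ y, q y := sub_nonneg.2 hsum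
    _ = ∑ y, (p y - q y) := (sum_sub_distrib ..).symm
    _ ≤ klDiv p q := sum_le_sum fun y _ => sub_le_mul_log_div (hp y) (hq y) (hpq y)

end KullbackLeibler

section Selection

variable {Ω V : Type*} {L : ℕ} (X : Ω → Fin L → V)

lemma evSel_univ (x : Fin L → V) : evSel X univ x = fun ω => X ω = x := by
  funext ω
  simp [evSel, funext_iff]

lemma evSel_of_eq {x : Fin L → V} {ω : Ω} (h : X ω = x) (F : Finset (Fin L)) : evSel X F x ω :=
  fun i _ => by rw [h]

lemma evSel_mono {A G : Finset (Fin L)} (hAG : A ⊆ G) {x : Fin L → V} {ω : Ω}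
    (h : evSel X G x ω) : evSel X A x ω :=
  fun i hi => h i (hAG hi)

lemma evSel_congr {F : Finset (Fin L)} {x x' : Fin L → V} (h : ∀ i ∈ F, x' i = x i) :
    evSel X F x' = evSel X F x := by
  funext ω
  exact propext (forall₂_congr fun i hi => by rw [h i hi])

lemma pr_evSel_pos [Fintype Ω] {P : Ω → ℝ} (hP : ∀ ω, 0 ≤ P ω) {x : Fin L → V}
    (hx : 0 < pr P (fun ω => X ω = x)) (F : Finset (Fin L)) : 0 < pr P (evSel X F x) :=
  hx.trans_le (pr_mono P hP fun _ h => evSel_of_eq X h F)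

end Selection

def CondIndepGivenSel {Ω V 𝒴 : Type*} [Fintype Ω] {L : ℕ} (P : Ω → ℝ) (X : Ω → Fin L → V)
    (Y : Ω → 𝒴) (A : Finset (Fin L)) : Prop :=
  ∀ (x : Fin L → V) (y : 𝒴), 0 < pr P (evSel X A x) →
    pr P (fun ω => Y ω = y ∧ X ω = x) * pr P (evSel X A x)
      = pr P (fun ω => Y ω = y ∧ evSel X A x ω) * pr P (fun ω => X ω = x)

section CondIndep

variable {Ω V 𝒴 : Type*} [Fintype Ω] {L : ℕ} {P : Ω → ℝ} {X : Ω → Fin L → V} {Y : Ω → 𝒴}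
  {A G : Finset (Fin L)} {x : Fin L → V}

lemma CondIndepGivenSel.pr_and_evSel_mul (hCI : CondIndepGivenSel P X Y A) (hAG : A ⊆ G)
    (hA : 0 < pr P (evSel X A x)) (y : 𝒴) :
    pr P (fun ω => Y ω = y ∧ evSel X G x ω) * pr P (evSel X A x)
      = pr P (fun ω => Y ω = y ∧ evSel X A x ω) * pr P (evSel X G x) := by
  have hfib := fun Q => pr_and_eq_sum_fibres P X Q (evSel X G x)
    (fun x' => ∀ i ∈ G, x' i = x i) fun _ => Iff.rfl
  have hG := hfib fun _ => True
  simp only [true_and] at hG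
  rw [hfib, hG, sum_mul, mul_sum]
  refine sum_congr rfl fun x' hx' => ?_
  simp only [mem_filter] at hx'
  have hAx' : evSel X A x' = evSel X A x := evSel_congr X fun i hi => hx'.2 i (hAG hi)
  simpa only [hAx'] using hCI x' y (hAx' ▸ hA)

lemma CondIndepGivenSel.condDist_evSel (hP : ∀ ω, 0 ≤ P ω) (hCI : CondIndepGivenSel P X Y A)
    (hAG : A ⊆ G) (hG : 0 < pr P (evSel X G x)) :
    condDist P Y (evSel X G x) = condDist P Y (evSel X A x) := by
  have hA : 0 < pr P (evSel X A x) := hG.trans_le (pr_mono P hP fun _ => evSel_mono X hAG)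
  funext y
  rw [condDist, condPr, condDist, condPr, div_eq_div_iff hG.ne' hA.ne']
  exact hCI.pr_and_evSel_mul hAG hA y

end CondIndep

section Invase

variable {Ω V 𝒴 : Type*} [Fintype Ω] [Fintype 𝒴] {L N : ℕ} {P : Ω → ℝ} {X : Ω → Fin L → V}
  {Y : Ω → 𝒴} {lam : ℝ} {x : Fin L → V}

lemma invaseObj_nonneg (hP : ∀ ω, 0 ≤ P ω) (hlam : 0 ≤ lam) (hx : 0 < pr P (fun ω => X ω = x))
    (F : Finset (Fin L)) : 0 ≤ invaseObj P X Y lam N F x := by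
  have hF := pr_evSel_pos X hP hx F
  refine add_nonneg (klDiv_nonneg (condDist_nonneg P hP Y _) (condDist_nonneg P hP Y _)
    (fun _ => condDist_eq_zero_of_imp P hP Y hF fun _ h => evSel_of_eq X h F) ?_) (by positivity)
  rw [sum_condDist P Y hF.ne', sum_condDist P Y hx.ne']

lemma CondIndepGivenSel.invaseObj_eq_zero (hP : ∀ ω, 0 ≤ P ω) {A F : Finset (Fin L)}
    (hCI : CondIndepGivenSel P X Y A) (hAF : A ⊆ F) (hFcard : F.card = N)
    (hx : 0 < pr P (fun ω => X ω = x)) : invaseObj P X Y lam N F x = 0 := by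
  have hsel : ∀ G, A ⊆ G → condDist P Y (evSel X G x) = condDist P Y (evSel X A x) :=
    fun G hAG => hCI.condDist_evSel hP hAG (pr_evSel_pos X hP hx G)
  rw [invaseObj, ← evSel_univ, hsel univ (subset_univ A), hsel F hAF, klDiv_self, hFcard]
  simp

end Invase

theorem stmt1_general {Ω V 𝒴 : Type*} [Fintype Ω] [Fintype 𝒴] {L N : ℕ}
    (X : Ω → Fin L → V) (Y : Ω → 𝒴) (P : Ω → ℝ)
    (hP : ∀ ω, 0 ≤ P ω)
    (A : Finset (Fin L))
    (hCI : ∀ (x : Fin L → V) (y : 𝒴), 0 < pr P (evSel X A x) →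
      pr P (fun ω => Y ω = y ∧ X ω = x) * pr P (evSel X A x)
        = pr P (fun ω => Y ω = y ∧ evSel X A x ω) * pr P (fun ω => X ω = x))
    (lam : ℝ) (hlam : 0 ≤ lam)
    (F : Finset (Fin L)) (hAF : A ⊆ F) (hFcard : F.card = N)
    (x : Fin L → V) (hx : 0 < pr P (fun ω => X ω = x)) :
    invaseObj P X Y lam N F x = 0 ∧
      ∀ F' : Finset (Fin L), invaseObj P X Y lam N F x ≤ invaseObj P X Y lam N F' x := by
  have hzero : invaseObj P X Y lam N F x = 0 :=
    CondIndepGivenSel.invaseObj_eq_zero hP hCI hAF hFcard hx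
  exact ⟨hzero, fun F' => hzero ▸ invaseObj_nonneg hP hlam hx F'⟩

/-- Any `F ⊇ A` with `|F| = N` achieves value `0` of the per-instance INVASE objective
`L_N(·; x)` at every `x` with `P(X = x) > 0`, hence minimizes it over all subsets. -/
theorem stmt1 {Ω V 𝒴 : Type*} [Fintype Ω] [Fintype V] [Fintype 𝒴] {L M N : ℕ}
    (X : Ω → Fin L → V) (Y : Ω → 𝒴) (P : Ω → ℝ)
    (hP : ∀ ω, 0 ≤ P ω) (hPsum : ∑ ω, P ω = 1)
    (A : Finset (Fin L)) (hAcard : A.card = M)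
    (hCI : ∀ (x : Fin L → V) (y : 𝒴), 0 < pr P (evSel X A x) →
      pr P (fun ω => Y ω = y ∧ X ω = x) * pr P (evSel X A x)
        = pr P (fun ω => Y ω = y ∧ evSel X A x ω) * pr P (fun ω => X ω = x))
    (lam : ℝ) (hlam : 0 ≤ lam) (hMN : M ≤ N) (hNL : N ≤ L)
    (F : Finset (Fin L)) (hAF : A ⊆ F) (hFcard : F.card = N)
    (x : Fin L → V) (hx : 0 < pr P (fun ω => X ω = x)) :
    invaseObj P X Y lam N F x = 0 ∧
      ∀ F' : Finset (Fin L), invaseObj P X Y lam N F x ≤ invaseObj P X Y lam N F' x :=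
  stmt1_general X Y P hP A hCI lam hlam F hAF hFcard x hx
end

section
/- Suppose r(s, mask(g₁(s), a)) = r(s, a) and T(s, mask(g₂(s), a)) = T(s, a) for all s ∈ S and a : Fin d → ℝ, and let g be the pointwise OR of g₁ and g₂. Then for every deterministic stationary policy π : S → A, the masked policy π^{(g)} defined by π^{(g)}(s) = mask(g(s), π(s)) generates the same trajectory of states as π from every initial state and satisfies V^{π^{(g)}}(s) = V^π(s) for every s ∈ S. -/
/-- Trajectory of a deterministic MDP under policy `π` from initial state `s`:
`s₀ = s`, `s_{t+1} = T (s_t, π s_t)`. -/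
def traj {S A : Type*} (T : S × A → S) (π : S → A) (s : S) : ℕ → S
  | 0 => s
  | t + 1 => T (traj T π s t, π (traj T π s t))

/-- Value function `V^π(s) = ∑_{t=0}^∞ γ^t · r(s_t, π s_t)`. -/
noncomputable def Vpi {S A : Type*} (T : S × A → S) (r : S × A → ℝ) (γ : ℝ)
    (π : S → A) (s : S) : ℝ :=
  ∑' t : ℕ, γ ^ t * r (traj T π s t, π (traj T π s t))

/-- Masked action: `mask(m, a)(i) = a i` if `m i = true`, else `0`. -/
def maskAct {d : ℕ} (m : Fin d → Bool) (a : Fin d → ℝ) : Fin d → ℝ :=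
  fun i => if m i then a i else 0

theorem traj_eq_of_transition_eq {S A : Type*} {T : S × A → S} {π π' : S → A}
    (h : ∀ s, T (s, π' s) = T (s, π s)) (s : S) : traj T π' s = traj T π s := by
  funext t
  induction t with
  | zero => rfl
  | succ t ih => simp only [traj, ih, h]

theorem Vpi_eq_of_transition_eq_of_reward_eq {S A : Type*} {T : S × A → S} {r : S × A → ℝ}
    (γ : ℝ) {π π' : S → A} (hT : ∀ s, T (s, π' s) = T (s, π s))
    (hr : ∀ s, r (s, π' s) = r (s, π s)) (s : S) : Vpi T r γ π' s = Vpi T r γ π s := by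
  simp only [Vpi, traj_eq_of_transition_eq hT, hr]

theorem maskAct_maskAct_of_le {d : ℕ} {m m' : Fin d → Bool} (h : m ≤ m') (a : Fin d → ℝ) :
    maskAct m (maskAct m' a) = maskAct m a := by
  funext i
  by_cases hi : m i
  · simp [maskAct, hi, le_antisymm (Bool.le_true _) (hi ▸ h i)]
  · simp [maskAct, hi]

theorem comp_maskAct_eq_of_le {d : ℕ} {X : Type*} {f : (Fin d → ℝ) → X} {m m' : Fin d → Bool}
    (hf : ∀ a, f (maskAct m a) = f a) (h : m ≤ m') (a : Fin d → ℝ) :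
    f (maskAct m' a) = f a := by
  rw [← hf, maskAct_maskAct_of_le h, hf]

theorem stmt7_general {S : Type*} {d : ℕ}
    (T : S × (Fin d → ℝ) → S) (r : S × (Fin d → ℝ) → ℝ) (γ : ℝ)
    (g₁ g₂ g : S → Fin d → Bool)
    (hg : ∀ (s : S) (i : Fin d), g s i = (g₁ s i || g₂ s i))
    (hr : ∀ (s : S) (a : Fin d → ℝ), r (s, maskAct (g₁ s) a) = r (s, a))
    (hT : ∀ (s : S) (a : Fin d → ℝ), T (s, maskAct (g₂ s) a) = T (s, a))
    (π : S → Fin d → ℝ) :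
    (∀ (s : S) (t : ℕ),
        traj T (fun s' => maskAct (g s') (π s')) s t = traj T π s t) ∧
      ∀ s : S, Vpi T r γ (fun s' => maskAct (g s') (π s')) s = Vpi T r γ π s := by
  have hg₁ : ∀ s, g₁ s ≤ g s := fun s i => hg s i ▸ Bool.left_le_or _ _
  have hg₂ : ∀ s, g₂ s ≤ g s := fun s i => hg s i ▸ Bool.right_le_or _ _
  have hTg : ∀ s, T (s, maskAct (g s) (π s)) = T (s, π s) := fun s =>
    comp_maskAct_eq_of_le (f := fun a => T (s, a)) (hT s) (hg₂ s) (π s)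
  have hrg : ∀ s, r (s, maskAct (g s) (π s)) = r (s, π s) := fun s =>
    comp_maskAct_eq_of_le (f := fun a => r (s, a)) (hr s) (hg₁ s) (π s)
  exact ⟨fun s => congrFun (traj_eq_of_transition_eq hTg s),
    Vpi_eq_of_transition_eq_of_reward_eq γ hTg hrg⟩

/-- If `r` depends only on the actions selected by `g₁` and `T` only on those selected
by `g₂`, and `g` is their pointwise OR, then the masked policy `π^{(g)}` generates the
same state trajectory as `π` from every initial state and has the same value. -/
theorem stmt7 {S : Type*} {d : ℕ}
    (T : S × (Fin d → ℝ) → S) (r : S × (Fin d → ℝ) → ℝ) (γ : ℝ)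
    (hγ0 : 0 < γ) (hγ1 : γ < 1)
    (g₁ g₂ g : S → Fin d → Bool)
    (hg : ∀ (s : S) (i : Fin d), g s i = (g₁ s i || g₂ s i))
    (hr : ∀ (s : S) (a : Fin d → ℝ), r (s, maskAct (g₁ s) a) = r (s, a))
    (hT : ∀ (s : S) (a : Fin d → ℝ), T (s, maskAct (g₂ s) a) = T (s, a))
    (π : S → Fin d → ℝ) :
    (∀ (s : S) (t : ℕ),
        traj T (fun s' => maskAct (g s') (π s')) s t = traj T π s t) ∧
      ∀ s : S, Vpi T r γ (fun s' => maskAct (g s') (π s')) s = Vpi T r γ π s :=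
  stmt7_general T r γ g₁ g₂ g hg hr hT π
end

section
/- Suppose r(s, mask(g₁(s), a)) = r(s, a) and T(s, mask(g₂(s), a)) = T(s, a) for all s ∈ S and a : Fin d → ℝ, and let g be the pointwise OR of g₁ and g₂. Define the optimal state value V*(s) = ⨆_{π : S → A} V^π(s) and the state-action value Q(s, a) = r(s, a) + γ · V*(T(s, a)). Then the Q-function is invariant under masking with g: for every s ∈ S and a : Fin d → ℝ, Q(s, mask(g(s), a)) = Q(s, a). -/
/-- Optimal state value `V*(s) = ⨆_π V^π(s)`. -/
noncomputable def Vstar {S : Type*} {d : ℕ} (T : S × (Fin d → ℝ) → S)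
    (r : S × (Fin d → ℝ) → ℝ) (γ : ℝ) (s : S) : ℝ :=
  ⨆ π : S → Fin d → ℝ, Vpi T r γ π s

/-- State-action value `Q(s, a) = r(s, a) + γ · V*(T(s, a))`. -/
noncomputable def Qstar {S : Type*} {d : ℕ} (T : S × (Fin d → ℝ) → S)
    (r : S × (Fin d → ℝ) → ℝ) (γ : ℝ) (s : S) (a : Fin d → ℝ) : ℝ :=
  r (s, a) + γ * Vstar T r γ (T (s, a))

theorem maskAct_maskAct_of_imp {d : ℕ} {m m' : Fin d → Bool}
    (h : ∀ i, m i = true → m' i = true) (a : Fin d → ℝ) :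
    maskAct m (maskAct m' a) = maskAct m a := by
  funext i
  by_cases hi : m i = true <;> simp [maskAct, hi, h]

theorem apply_maskAct_of_imp {d : ℕ} {X : Type*} {m m' : Fin d → Bool}
    (h : ∀ i, m i = true → m' i = true) {f : (Fin d → ℝ) → X}
    (hf : ∀ a, f (maskAct m a) = f a) (a : Fin d → ℝ) :
    f (maskAct m' a) = f a := by
  rw [← hf, maskAct_maskAct_of_imp h, hf]

theorem stmt9_general {S : Type*} {d : ℕ}
    (T : S × (Fin d → ℝ) → S) (r : S × (Fin d → ℝ) → ℝ) (γ : ℝ)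
    (g₁ g₂ g : S → Fin d → Bool)
    (hg : ∀ (s : S) (i : Fin d), g s i = (g₁ s i || g₂ s i))
    (hr : ∀ (s : S) (a : Fin d → ℝ), r (s, maskAct (g₁ s) a) = r (s, a))
    (hT : ∀ (s : S) (a : Fin d → ℝ), T (s, maskAct (g₂ s) a) = T (s, a)) :
    ∀ (s : S) (a : Fin d → ℝ),
      Qstar T r γ s (maskAct (g s) a) = Qstar T r γ s a := by
  intro s a
  have hr' : r (s, maskAct (g s) a) = r (s, a) :=
    apply_maskAct_of_imp (fun i hi => by simp [hg, hi]) (f := fun a => r (s, a)) (hr s) a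
  have hT' : T (s, maskAct (g s) a) = T (s, a) :=
    apply_maskAct_of_imp (fun i hi => by simp [hg, hi]) (f := fun a => T (s, a)) (hT s) a
  rw [Qstar, Qstar, hr', hT']

/-- Under the assumptions of the masking lemma and uniformly bounded rewards, the
`Q`-function is invariant under masking with `g`: `Q(s, mask(g s, a)) = Q(s, a)`. -/
theorem stmt9 {S : Type*} {d : ℕ}
    (T : S × (Fin d → ℝ) → S) (r : S × (Fin d → ℝ) → ℝ) (γ : ℝ)
    (hγ0 : 0 < γ) (hγ1 : γ < 1)
    (R : ℝ) (hR : ∀ (s : S) (a : Fin d → ℝ), |r (s, a)| ≤ R)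
    (g₁ g₂ g : S → Fin d → Bool)
    (hg : ∀ (s : S) (i : Fin d), g s i = (g₁ s i || g₂ s i))
    (hr : ∀ (s : S) (a : Fin d → ℝ), r (s, maskAct (g₁ s) a) = r (s, a))
    (hT : ∀ (s : S) (a : Fin d → ℝ), T (s, maskAct (g₂ s) a) = T (s, a)) :
    ∀ (s : S) (a : Fin d → ℝ),
      Qstar T r γ s (maskAct (g s) a) = Qstar T r γ s a :=
  stmt9_general T r γ g₁ g₂ g hg hr hT
end
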